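/- arXiv:math/0009043 — 3 statements merged into one kernel-verified Lean document; each statement's English description precedes it below -/
import Mathlib

section
/- Let H be a finite group and V a finite-dimensional complex representation of H. Suppose V decomposes as a direct sum of H-invariant subspaces V = V' ⊕ V'', where V' is itself a direct sum of one-dimensional H-invariant subspaces L_1, ..., L_r on which H acts via characters χ_1, ..., χ_r : H → ℂˣ, and every irreducible subrepresentation of V'' has dimension at least 2. Let N = ⋂_{j=1}^r ker χ_j be the common kernel of the characters (with N = H if r = 0). Then the subspace V^N of N-fixed vectors equals V'. -/
/-- Let `H` be a finite group and `V` a finite-dimensional complex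
representation of `H`, decomposing as `V = V' ⊕ V''` into `H`-invariant subspaces, where
`V'` is a direct sum of one-dimensional `H`-invariant subspaces `L 1, ..., L r` on which
`H` acts via characters `χ 1, ..., χ r : H → ℂˣ`, and every irreducible subrepresentation
of `V''` has dimension at least `2`.  If `N = ⋂ j, ker (χ j)` is the common kernel of the
characters, then the subspace of `N`-fixed vectors equals `V'`. -/
theorem stmt0 {H V : Type*} [Group H] [Finite H]
    [AddCommGroup V] [Module ℂ V] [FiniteDimensional ℂ V]
    (ρ : Representation ℂ H V)
    (V' V'' : Submodule ℂ V)
    (hV'inv : ∀ (h : H), ∀ v ∈ V', ρ h v ∈ V')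
    (hV''inv : ∀ (h : H), ∀ v ∈ V'', ρ h v ∈ V'')
    (hsum : V' ⊔ V'' = ⊤) (hdisj : V' ⊓ V'' = ⊥)
    (r : ℕ) (L : Fin r → Submodule ℂ V) (χ : Fin r → (H →* ℂˣ))
    (hLdim : ∀ j, Module.finrank ℂ (L j) = 1)
    (hLact : ∀ j (h : H), ∀ v ∈ L j, ρ h v = (χ j h : ℂ) • v)
    (hLsup : (⨆ j, L j) = V')
    (hLind : iSupIndep L)
    (hV''irr : ∀ U : Submodule ℂ V, U ≤ V'' → U ≠ ⊥ →
      (∀ (h : H), ∀ v ∈ U, ρ h v ∈ U) →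
      (∀ U' : Submodule ℂ V, U' ≤ U → (∀ (h : H), ∀ v ∈ U', ρ h v ∈ U') →
        U' = ⊥ ∨ U' = U) →
      2 ≤ Module.finrank ℂ U)
    (N : Subgroup H) (hN : N = ⨅ j, (χ j).ker) :
    ∀ v : V, (∀ n ∈ N, ρ n v = v) ↔ v ∈ V' := by
  have hNmem : ∀ n : H, n ∈ N ↔ ∀ j, χ j n = 1 := by
    intro n; rw [hN]; simp [Subgroup.mem_iInf, MonoidHom.mem_ker]
  -- the fixed-point submodule
  set F : Submodule ℂ V :=
    { carrier := {v | ∀ n ∈ N, ρ n v = v}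
      add_mem' := fun {a b} ha hb n hn => by rw [map_add, ha n hn, hb n hn]
      zero_mem' := fun n hn => map_zero _
      smul_mem' := fun c v hv n hn => by rw [map_smul, hv n hn] } with hFdef
  have hmemF : ∀ v : V, v ∈ F ↔ ∀ n ∈ N, ρ n v = v := fun v => Iff.rfl
  have hV'F : V' ≤ F := by
    rw [← hLsup]
    refine iSup_le fun j v hv => ?_
    intro n hn
    rw [hLact j n v hv, (hNmem n).mp hn j]
    simp
  -- operators commute on F
  have hcomm : ∀ (g h : H) (v : V), v ∈ F → ρ g (ρ h v) = ρ h (ρ g v) := by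
    intro g h v hv
    have hcN : g⁻¹ * h⁻¹ * g * h ∈ N := by
      rw [hNmem]
      intro j
      rw [map_mul, map_mul, map_mul, map_inv, map_inv]
      rw [mul_assoc, mul_mul_mul_comm, inv_mul_cancel, inv_mul_cancel, one_mul]
    have e1 : ρ g (ρ h v) = ρ (g * h) v := by rw [map_mul]; rfl
    have e2 : ρ h (ρ g v) = ρ (h * g) v := by rw [map_mul]; rfl
    rw [e1, e2]
    have : g * h = (h * g) * (g⁻¹ * h⁻¹ * g * h) := by group
    rw [this, map_mul]
    have := hv _ hcN
    simp only [Module.End.mul_apply]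
    rw [this]
  -- F is H-invariant
  have hFinv : ∀ (h : H), ∀ v ∈ F, ρ h v ∈ F := by
    intro h v hv n hn
    have hcn : h⁻¹ * n * h ∈ N := by
      rw [hNmem]
      intro j
      have := (hNmem n).mp hn j
      rw [map_mul, map_mul, map_inv, this]
      group
    have : ρ n (ρ h v) = ρ h (ρ (h⁻¹ * n * h) v) := by
      rw [← Module.End.mul_apply, ← map_mul, ← Module.End.mul_apply, ← map_mul]
      congr 1
      group
    rw [this, hv _ hcn]
  -- the key claim : V'' ⊓ F = ⊥
  have hWbot : V'' ⊓ F = ⊥ := by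
    by_contra hWne
    set W := V'' ⊓ F with hWdef
    have hWinv : ∀ (h : H), ∀ v ∈ W, ρ h v ∈ W := fun h v hv =>
      ⟨hV''inv h v hv.1, hFinv h v hv.2⟩
    set S : Set (Submodule ℂ V) :=
      {U | U ≤ W ∧ U ≠ ⊥ ∧ ∀ (h : H), ∀ v ∈ U, ρ h v ∈ U} with hSdef
    have hWS : W ∈ S := by exact ⟨le_rfl, hWne, hWinv⟩
    have hne : {k | ∃ U ∈ S, Module.finrank ℂ U = k}.Nonempty := ⟨Module.finrank ℂ W, by exact ⟨W, hWS, rfl⟩⟩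
    obtain ⟨U, hUS, hUrank⟩ := Nat.sInf_mem hne
    have hmin : ∀ U' ∈ S, Module.finrank ℂ U ≤ Module.finrank ℂ U' := by
      intro U' hU'
      rw [hUrank]
      exact Nat.sInf_le (Set.mem_setOf.mpr ⟨U', hU', rfl⟩)
    obtain ⟨hUW, hUne, hUinv⟩ := hUS
    have hUF : U ≤ F := hUW.trans inf_le_right
    have hminU : ∀ U' : Submodule ℂ V, U' ≤ U → U' ≠ ⊥ →
        (∀ (h : H), ∀ v ∈ U', ρ h v ∈ U') → U' = U := by
      intro U' hle hne' hinv'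
      exact Submodule.eq_of_le_of_finrank_le hle (hmin U' (by exact ⟨hle.trans hUW, hne', hinv'⟩))
    -- every ρ h acts as a scalar on U
    have hscalar : ∀ h : H, ∃ c : ℂ, ∀ v ∈ U, ρ h v = c • v := by
      intro h
      haveI : Nontrivial U := Submodule.nontrivial_iff_ne_bot.mpr hUne
      set f : U →ₗ[ℂ] U := (ρ h).restrict (fun v hv => hUinv h v hv) with hfdef
      obtain ⟨c, hc⟩ := Module.End.exists_eigenvalue f
      obtain ⟨u, hu⟩ := hc.exists_hasEigenvector
      have hu0 : (u : V) ≠ 0 := fun h0 => hu.right (Subtype.ext h0)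
      have hueq : ρ h (u : V) = c • (u : V) := by
        have := hu.apply_eq_smul
        have h2 := congrArg (Subtype.val) this
        simpa [hfdef, LinearMap.restrict_coe_apply] using h2
      set E : Submodule ℂ V := U ⊓ LinearMap.ker (ρ h - c • LinearMap.id) with hEdef
      have hmemE : ∀ v : V, v ∈ E ↔ v ∈ U ∧ ρ h v = c • v := by
        intro v
        simp only [hEdef, Submodule.mem_inf, LinearMap.mem_ker, LinearMap.sub_apply,
          LinearMap.smul_apply, LinearMap.id_apply, sub_eq_zero]
      have hEne : E ≠ ⊥ := by
        rw [Submodule.ne_bot_iff]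
        exact ⟨u, (hmemE u).mpr ⟨u.2, hueq⟩, hu0⟩
      have hEle : E ≤ U := inf_le_left
      have hEinv : ∀ (g : H), ∀ v ∈ E, ρ g v ∈ E := by
        intro g v hv
        obtain ⟨hvU, hveq⟩ := (hmemE v).mp hv
        refine (hmemE _).mpr ⟨hUinv g v hvU, ?_⟩
        rw [← hcomm g h v (hUF hvU), hveq, map_smul]
      have : E = U := hminU E hEle hEne hEinv
      refine ⟨c, fun v hv => ?_⟩
      exact ((hmemE v).mp (this ▸ hv)).2
    -- U is 1-dimensional
    obtain ⟨u0, hu0U, hu0ne⟩ := (Submodule.ne_bot_iff U).mp hUne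
    have hspan : (Submodule.span ℂ {u0}) = U := by
      refine hminU _ ?_ ?_ ?_
      · rw [Submodule.span_le, Set.singleton_subset_iff]; exact hu0U
      · simpa [Submodule.span_singleton_eq_bot] using hu0ne
      · intro h v hv
        obtain ⟨a, rfl⟩ := Submodule.mem_span_singleton.mp hv
        obtain ⟨c, hc⟩ := hscalar h
        rw [map_smul, hc u0 hu0U]
        exact Submodule.smul_mem _ _ (Submodule.smul_mem _ _ (Submodule.mem_span_singleton_self u0))
    have hrank1 : Module.finrank ℂ U = 1 := by
      rw [← hspan]; exact finrank_span_singleton hu0ne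
    have h2le : 2 ≤ Module.finrank ℂ U := by
      refine hV''irr U (hUW.trans inf_le_left) hUne hUinv ?_
      intro U' hle hinv'
      by_cases hb : U' = ⊥
      · exact Or.inl hb
      · exact Or.inr (hminU U' hle hb hinv')
    omega
  -- conclude
  intro v
  constructor
  · intro hv
    have hvtop : v ∈ V' ⊔ V'' := by rw [hsum]; exact Submodule.mem_top
    obtain ⟨a, ha, b, hb, hab⟩ := Submodule.mem_sup.mp hvtop
    have hvF : v ∈ F := hv
    have hbF : b ∈ F := by
      have : b = v - a := by rw [← hab, add_sub_cancel_left]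
      rw [this]
      exact F.sub_mem hvF (hV'F ha)
    have hbW : b ∈ V'' ⊓ F := ⟨hb, hbF⟩
    rw [hWbot, Submodule.mem_bot] at hbW
    rw [← hab, hbW, add_zero]
    exact ha
  · intro hv n hn
    exact hV'F hv n hn
end

section
/- Let G be a finite group acting on a set V. Suppose x₁, x₂ ∈ V are such that H₁ := St_G(x₁) and H₂ := St_G(x₂) are nonabelian, |H₁| = |H₂|, and this common order is maximal among orders of nonabelian stabilizers, i.e., for every y ∈ V with St_G(y) nonabelian one has |St_G(y)| ≤ |H₁|. Then the fixed-point sets F(H₁) and F(H₂) either coincide or are disjoint; moreover, if x ∈ F(H₁) ∩ F(H₂) then H₁ = H₂ = St_G(x). -/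
theorem aux_key {G V : Type*} [Group G] [Finite G] [MulAction G V]
    (x₁ : V)
    (hnonab₁ : ¬ ∀ a b : MulAction.stabilizer G x₁, a * b = b * a)
    (hmax : ∀ y : V, (¬ ∀ a b : MulAction.stabilizer G y, a * b = b * a) →
      Nat.card (MulAction.stabilizer G y) ≤ Nat.card (MulAction.stabilizer G x₁))
    (x : V) (hx : ∀ h ∈ MulAction.stabilizer G x₁, h • x = x) :
    MulAction.stabilizer G x₁ = MulAction.stabilizer G x := by
  have hle : MulAction.stabilizer G x₁ ≤ MulAction.stabilizer G x := fun g hg => hx g hg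
  have hnonab : ¬ ∀ a b : MulAction.stabilizer G x, a * b = b * a := by
    intro h
    apply hnonab₁
    intro a b
    simpa [Subtype.ext_iff] using h ⟨a, hle a.2⟩ ⟨b, hle b.2⟩
  have hcard := hmax x hnonab
  exact Subgroup.eq_of_le_of_card_ge hle hcard

/-- Let the finite group `G` act on a set `V` and let `x₁, x₂ ∈ V` have
nonabelian stabilizers `H₁, H₂` of equal, maximal order among nonabelian stabilizers.
Then the fixed-point sets `F(H₁)` and `F(H₂)` coincide or are disjoint; moreover any
`x ∈ F(H₁) ∩ F(H₂)` satisfies `H₁ = H₂ = St_G(x)`. -/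
theorem stmt5 {G V : Type*} [Group G] [Finite G] [MulAction G V]
    (x₁ x₂ : V)
    (hnonab₁ : ¬ ∀ a b : MulAction.stabilizer G x₁, a * b = b * a)
    (hnonab₂ : ¬ ∀ a b : MulAction.stabilizer G x₂, a * b = b * a)
    (hcard : Nat.card (MulAction.stabilizer G x₁) = Nat.card (MulAction.stabilizer G x₂))
    (hmax : ∀ y : V, (¬ ∀ a b : MulAction.stabilizer G y, a * b = b * a) →
      Nat.card (MulAction.stabilizer G y) ≤ Nat.card (MulAction.stabilizer G x₁)) :
    ({x : V | ∀ h ∈ MulAction.stabilizer G x₁, h • x = x} =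
        {x : V | ∀ h ∈ MulAction.stabilizer G x₂, h • x = x} ∨
      {x : V | ∀ h ∈ MulAction.stabilizer G x₁, h • x = x} ∩
        {x : V | ∀ h ∈ MulAction.stabilizer G x₂, h • x = x} = ∅) ∧
    ∀ x : V, (∀ h ∈ MulAction.stabilizer G x₁, h • x = x) →
      (∀ h ∈ MulAction.stabilizer G x₂, h • x = x) →
      MulAction.stabilizer G x₁ = MulAction.stabilizer G x ∧
        MulAction.stabilizer G x₂ = MulAction.stabilizer G x := by
  have hmax₂ : ∀ y : V, (¬ ∀ a b : MulAction.stabilizer G y, a * b = b * a) →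
      Nat.card (MulAction.stabilizer G y) ≤ Nat.card (MulAction.stabilizer G x₂) :=
    fun y hy => hcard ▸ hmax y hy
  have key : ∀ x : V, (∀ h ∈ MulAction.stabilizer G x₁, h • x = x) →
      (∀ h ∈ MulAction.stabilizer G x₂, h • x = x) →
      MulAction.stabilizer G x₁ = MulAction.stabilizer G x ∧
        MulAction.stabilizer G x₂ = MulAction.stabilizer G x := fun x h1 h2 =>
    ⟨aux_key x₁ hnonab₁ hmax x h1, aux_key x₂ hnonab₂ hmax₂ x h2⟩
  refine ⟨?_, key⟩
  by_cases hne : ({x : V | ∀ h ∈ MulAction.stabilizer G x₁, h • x = x} ∩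
      {x : V | ∀ h ∈ MulAction.stabilizer G x₂, h • x = x}).Nonempty
  · left
    obtain ⟨x, h1, h2⟩ := hne
    obtain ⟨e1, e2⟩ := key x h1 h2
    have : MulAction.stabilizer G x₁ = MulAction.stabilizer G x₂ := e1.trans e2.symm
    rw [this]
  · right
    exact Set.not_nonempty_iff_eq_empty.mp hne
end

section
/- Let H be a finite group and V a finite-dimensional complex representation of H given by an injective homomorphism ρ : H → GL(V). Suppose V decomposes as a direct sum of H-invariant subspaces V = V' ⊕ V'', where V' is a direct sum of one-dimensional H-invariant subspaces on which H acts via characters χ_1, ..., χ_r : H → ℂˣ, and every irreducible subrepresentation of V'' has dimension at least 2. Let N = ⋂_{j=1}^r ker χ_j. If N is nontrivial, then the subspace V^N of N-fixed vectors has codimension at least 2 in V, i.e., dim V − dim V^N ≥ 2. -/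
/-!
`V' ⊆ V^N` because `N` acts trivially on every line `L j`, and `V^N ≠ V` because `ρ` is
faithful. As `N` is normal, `V^N` is `H`-invariant, hence so is `W = V'' ∩ V^N`, and
`V = V' + V''` gives `codim_V V^N = codim_{V''} W`. By Maschke, `W` has an `H`-invariant
complement `U` in `V''`; were `codim V^N = 1`, `U` would be a one-dimensional, hence
irreducible, subrepresentation of `V''`, which is excluded.
-/

open Module

namespace Representation

variable {k G V : Type*} [Field k] [Group G] [AddCommGroup V] [Module k V]
  (ρ : Representation k G V)

theorem exists_invariant_isCompl [Finite G] [NeZero (Nat.card G : k)] (W : Submodule k V)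
    (hW : ∀ g, ∀ v ∈ W, ρ g v ∈ W) :
    ∃ U : Submodule k V, IsCompl W U ∧ ∀ g, ∀ v ∈ U, ρ g v ∈ U := by
  obtain ⟨U, hU⟩ := exists_isCompl (⟨W, fun g _ hv ↦ hW g _ hv⟩ : Subrepresentation ρ)
  refine ⟨U.toSubmodule, ⟨?_, ?_⟩, fun g _ hv ↦ U.apply_mem_toSubmodule g hv⟩
  · rw [disjoint_iff]
    exact congrArg Subrepresentation.toSubmodule hU.disjoint.eq_bot
  · rw [codisjoint_iff]
    exact congrArg Subrepresentation.toSubmodule hU.codisjoint.eq_top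

theorem exists_invariant_le_finrank_add_eq [Finite G] [NeZero (Nat.card G : k)]
    [FiniteDimensional k V] {W X : Submodule k V} (hWX : W ≤ X)
    (hW : ∀ g, ∀ v ∈ W, ρ g v ∈ W) (hX : ∀ g, ∀ v ∈ X, ρ g v ∈ X) :
    ∃ U ≤ X, (∀ g, ∀ v ∈ U, ρ g v ∈ U) ∧ finrank k W + finrank k U = finrank k X := by
  obtain ⟨U, hWU, hU⟩ := ρ.exists_invariant_isCompl W hW
  refine ⟨U ⊓ X, inf_le_right, fun g v hv ↦ ⟨hU g v hv.1, hX g v hv.2⟩, ?_⟩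
  have hsup : W ⊔ U ⊓ X = X := by
    rw [← sup_inf_assoc_of_le U hWX, hWU.codisjoint.eq_top, top_inf_eq]
  have hinf : W ⊓ (U ⊓ X) = ⊥ :=
    (hWU.disjoint.mono_right inf_le_left).eq_bot
  have := Submodule.finrank_sup_add_finrank_inf_eq W (U ⊓ X)
  rwa [hsup, hinf, finrank_bot, add_zero, eq_comm] at this

theorem apply_fixed_of_normal {N : Subgroup G} (hN : N.Normal) {v : V}
    (hv : ∀ n ∈ N, ρ n v = v) (g : G) : ∀ n ∈ N, ρ n (ρ g v) = ρ g v := by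
  intro n hn
  have hconj : g⁻¹ * n * g ∈ N := by simpa using hN.conj_mem n hn g⁻¹
  calc ρ n (ρ g v) = ρ g (ρ (g⁻¹ * n * g) v) := by
        simp [← Module.End.mul_apply, ← map_mul, mul_assoc]
    _ = ρ g v := by rw [hv _ hconj]

theorem apply_eq_of_mem_iSup_of_mem_iInf_ker {ι : Type*} (L : ι → Submodule k V)
    (χ : ι → G →* kˣ) (hL : ∀ j g, ∀ v ∈ L j, ρ g v = (χ j g : k) • v)
    {n : G} (hn : n ∈ ⨅ j, (χ j).ker) {v : V} (hv : v ∈ ⨆ j, L j) : ρ n v = v := by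
  rw [Subgroup.mem_iInf] at hn
  induction hv using Submodule.iSup_induction' with
  | mem j x hx => rw [hL j n x hx, (χ j).mem_ker.mp (hn j), Units.val_one, one_smul]
  | zero => exact map_zero _
  | add x y _ _ hx hy => rw [map_add, hx, hy]

theorem exists_apply_ne_of_injective (hρ : Function.Injective ρ) {g : G} (hg : g ≠ 1) :
    ∃ v, ρ g v ≠ v := by
  by_contra! h
  exact hg (hρ (LinearMap.ext fun v ↦ by simp [h v]))

end Representation

theorem stmt8_general {H V : Type*} [Group H] [Finite H]
    [AddCommGroup V] [Module ℂ V] [FiniteDimensional ℂ V]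
    (ρ : Representation ℂ H V) (hinj : Function.Injective ρ)
    (V' V'' : Submodule ℂ V)
    (hV''inv : ∀ (h : H), ∀ v ∈ V'', ρ h v ∈ V'')
    (hsum : V' ⊔ V'' = ⊤)
    (r : ℕ) (L : Fin r → Submodule ℂ V) (χ : Fin r → (H →* ℂˣ))
    (hLact : ∀ j (h : H), ∀ v ∈ L j, ρ h v = (χ j h : ℂ) • v)
    (hLsup : (⨆ j, L j) = V')
    (hV''irr : ∀ U : Submodule ℂ V, U ≤ V'' → U ≠ ⊥ →
      (∀ (h : H), ∀ v ∈ U, ρ h v ∈ U) →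
      (∀ U' : Submodule ℂ V, U' ≤ U → (∀ (h : H), ∀ v ∈ U', ρ h v ∈ U') →
        U' = ⊥ ∨ U' = U) →
      2 ≤ Module.finrank ℂ U)
    (N : Subgroup H) (hN : N = ⨅ j, (χ j).ker) (hNnontriv : N ≠ ⊥)
    (VN : Submodule ℂ V) (hVN : ∀ v : V, v ∈ VN ↔ ∀ n ∈ N, ρ n v = v) :
    2 ≤ Module.finrank ℂ V - Module.finrank ℂ VN := by
  have hNnormal : N.Normal := hN ▸ Subgroup.normal_iInf_normal fun j ↦ (χ j).normal_ker
  have hV'VN : V' ≤ VN := fun v hv ↦ (hVN v).2 fun n hn ↦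
    ρ.apply_eq_of_mem_iSup_of_mem_iInf_ker L χ hLact (hN ▸ hn) (hLsup ▸ hv)
  have hVNinv : ∀ h, ∀ v ∈ VN, ρ h v ∈ VN := fun h v hv ↦
    (hVN _).2 (ρ.apply_fixed_of_normal hNnormal ((hVN v).1 hv) h)
  have hVN_lt : finrank ℂ VN < finrank ℂ V := by
    obtain ⟨n, hnN, hn1⟩ := N.bot_or_exists_ne_one.resolve_left hNnontriv
    obtain ⟨v, hv⟩ := ρ.exists_apply_ne_of_injective hinj hn1
    exact Submodule.finrank_lt fun hVN_top ↦ hv ((hVN v).1 (hVN_top ▸ trivial) n hnN)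
  have hcodim : finrank ℂ V + finrank ℂ ↥(V'' ⊓ VN) = finrank ℂ V'' + finrank ℂ VN := by
    have hsup : V'' ⊔ VN = ⊤ :=
      eq_top_iff.mpr (hsum ▸ sup_le (hV'VN.trans le_sup_right) le_sup_left)
    rw [← Submodule.finrank_sup_add_finrank_inf_eq, hsup, finrank_top]
  obtain ⟨U, hUV'', hUinv, hU⟩ := ρ.exists_invariant_le_finrank_add_eq inf_le_left
    (fun h v hv ↦ ⟨hV''inv h v hv.1, hVNinv h v hv.2⟩) hV''inv
  suffices 2 ≤ finrank ℂ U by omega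
  by_contra! hU2
  have hUatom : IsAtom U := Submodule.isAtom_iff_finrank_eq_one.mpr (by omega)
  have := hV''irr U hUV'' hUatom.1 hUinv fun U' hU'U _ ↦ hUatom.le_iff.mp hU'U
  omega

/-- Let `H` be a finite group with a faithful finite-dimensional complex
representation `V` decomposing as `V = V' ⊕ V''` into `H`-invariant subspaces, where
`V'` is a direct sum of one-dimensional `H`-invariant subspaces with characters
`χ 1, ..., χ r : H → ℂˣ`, and every irreducible subrepresentation of `V''` has dimension
at least `2`.  Let `N = ⋂ j, ker (χ j)`.  If `N` is nontrivial, then the subspace `V^N`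
of `N`-fixed vectors has codimension at least `2` in `V`. -/
theorem stmt8 {H V : Type*} [Group H] [Finite H]
    [AddCommGroup V] [Module ℂ V] [FiniteDimensional ℂ V]
    (ρ : Representation ℂ H V) (hinj : Function.Injective ρ)
    (V' V'' : Submodule ℂ V)
    (hV'inv : ∀ (h : H), ∀ v ∈ V', ρ h v ∈ V')
    (hV''inv : ∀ (h : H), ∀ v ∈ V'', ρ h v ∈ V'')
    (hsum : V' ⊔ V'' = ⊤) (hdisj : V' ⊓ V'' = ⊥)
    (r : ℕ) (L : Fin r → Submodule ℂ V) (χ : Fin r → (H →* ℂˣ))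
    (hLdim : ∀ j, Module.finrank ℂ (L j) = 1)
    (hLact : ∀ j (h : H), ∀ v ∈ L j, ρ h v = (χ j h : ℂ) • v)
    (hLsup : (⨆ j, L j) = V')
    (hLind : iSupIndep L)
    (hV''irr : ∀ U : Submodule ℂ V, U ≤ V'' → U ≠ ⊥ →
      (∀ (h : H), ∀ v ∈ U, ρ h v ∈ U) →
      (∀ U' : Submodule ℂ V, U' ≤ U → (∀ (h : H), ∀ v ∈ U', ρ h v ∈ U') →
        U' = ⊥ ∨ U' = U) →
      2 ≤ Module.finrank ℂ U)
    (N : Subgroup H) (hN : N = ⨅ j, (χ j).ker) (hNnontriv : N ≠ ⊥)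
    (VN : Submodule ℂ V) (hVN : ∀ v : V, v ∈ VN ↔ ∀ n ∈ N, ρ n v = v) :
    2 ≤ Module.finrank ℂ V - Module.finrank ℂ VN :=
  stmt8_general ρ hinj V' V'' hV''inv hsum r L χ hLact hLsup hV''irr N hN hNnontriv VN hVN
end
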